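/- arXiv:1810.08380 — 2 statements merged into one kernel-verified Lean document; each statement's English description precedes it below -/
import Mathlib

section
/- Rogers' fixed point theorem: if f : code → code is computable then there exists a code c with eval (f c) = eval c. Consequently (second form), if f : code → ℕ →. ℕ is partial recursive (in both arguments) then there exists a code c with eval c = f c. -/
open Nat.Partrec.Code
theorem fixed_point_thms :
    (∀ f : Nat.Partrec.Code → Nat.Partrec.Code, Computable f →
      ∃ c, eval (f c) = eval c) ∧
    (∀ f : Nat.Partrec.Code → ℕ →. ℕ, Partrec₂ f →
      ∃ c, eval c = f c) :=
  ⟨fun _ => fixed_point, fun _ => fixed_point₂⟩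
end

section
/- Nondeterministic merge of partial recursive functions: if f, g : α →. σ are partial recursive, then there is a partial recursive h : α →. σ such that for every a, h a is defined iff f a is defined or g a is defined, and every value of h a is a value of f a or of g a. -/
theorem partrec_merge {α σ : Type*} [Primcodable α] [Primcodable σ]
    {f g : α →. σ} (hf : Partrec f) (hg : Partrec g) :
    ∃ h : α →. σ, Partrec h ∧ (∀ a, (h a).Dom ↔ (f a).Dom ∨ (g a).Dom) ∧
      ∀ a x, x ∈ h a → x ∈ f a ∨ x ∈ g a := by
  obtain ⟨h, hh, spec⟩ := Partrec.merge' hf hg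
  exact ⟨h, hh, fun a => (spec a).2, fun a => (spec a).1⟩
end
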